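/- (Equation (2.22), second case) Let m ≥ 1 and consider data (Ȳ_1,n_1),…,(Ȳ_{m+1},n_{m+1}). Let i_1(m), i_2(m),… be the SDMMSA indices and μ̂_{j,m} the SDMMSA estimates computed from the first m data points, and let i_1(m+1) denote the first SDMMSA index computed from all m+1 data points. If μ̂_{i_2(m),m} < Ȳ_{m+1} ≤ μ̂_{i_1(m),m} (equivalently, Ȳ_{i_2(m), i_1(m)−1} < Ȳ_{m+1} ≤ Ȳ_{i_1(m), m}), then i_1(m+1) = i_1(m). -/

import Mathlib

open Finset

noncomputable section SDMMSA

/-- Pooled weight `n_{i,j} = ∑_{h=i}^j n_h`. -/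
def pooledWeight (n : ℕ → ℝ) (i j : ℕ) : ℝ := ∑ h ∈ Finset.Icc i j, n h

/-- Pooled (weighted) mean `Ȳ_{i,j} = (∑_{h=i}^j n_h Y_h) / n_{i,j}`. -/
def pooledMean (n Y : ℕ → ℝ) (i j : ℕ) : ℝ :=
  (∑ h ∈ Finset.Icc i j, n h * Y h) / pooledWeight n i j

/-- The first SDMMSA index for the data `(Y_1,n_1),…,(Y_t,n_t)`:
the smallest `j ∈ [1,t]` at which `Ȳ_{j,t} = max_{1 ≤ j' ≤ t} Ȳ_{j',t}`. -/
def firstIdx (n Y : ℕ → ℝ) (t : ℕ) : ℕ :=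
  sInf {j | 1 ≤ j ∧ j ≤ t ∧ ∀ j', 1 ≤ j' → j' ≤ t → pooledMean n Y j' t ≤ pooledMean n Y j t}

/-- Fuel-based recursion implementing the SDMMSA step-down procedure: on data range `[1,t]`,
every `i ≥ i₁ = firstIdx n Y t` gets the pooled mean `Ȳ_{i₁,t}` of the top block, and for
`i < i₁` we recurse on the data range `[1, i₁ - 1]`.  A fuel of `t` suffices since the
range shrinks strictly at each step. -/
def sdmmsaAux (n Y : ℕ → ℝ) : ℕ → ℕ → ℕ → ℝ
  | 0, _, _ => 0
  | fuel + 1, t, i =>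
      if firstIdx n Y t ≤ i then pooledMean n Y (firstIdx n Y t) t
      else sdmmsaAux n Y fuel (firstIdx n Y t - 1) i

/-- `muhat n Y k i` is the SDMMSA estimate `μ̂_i` computed from the data
`(Y_1,n_1),…,(Y_k,n_k)`. -/
def muhat (n Y : ℕ → ℝ) (k i : ℕ) : ℝ := sdmmsaAux n Y k k i

/-- The SDMMSA indices `i_u` computed from the data `(Y_1,n_1),…,(Y_k,n_k)`:
`sdIdx n Y k 0 = i_0 = k+1` and `i_{u+1}` is the first SDMMSA index of `[1, i_u - 1]`. -/
def sdIdx (n Y : ℕ → ℝ) (k : ℕ) : ℕ → ℕ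
  | 0 => k + 1
  | u + 1 => firstIdx n Y (sdIdx n Y k u - 1)

/-- The number of steps `h` of the SDMMSA: the first `u` with `i_u = 1`. -/
def sdSteps (n Y : ℕ → ℝ) (k : ℕ) : ℕ := sInf {u | sdIdx n Y k u = 1}

end SDMMSA

/-! A new last point `Ȳ_{m+1}` that is at most the top-block mean `Ȳ_{i₁,m}` cannot make a later
start beat `i₁`: pooling only mixes in values below `Ȳ_{i₁,m}`, while the block `[i₁, m+1]`
stays at least `Ȳ_{m+1}`. It lifts no earlier start to the level of `i₁` either: every block
`[j, i₁-1]` with `j < i₁` has mean at most `Ȳ_{i₂,i₁-1} < Ȳ_{m+1} ≤ Ȳ_{i₁,m+1}`, so pooling it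
with `[i₁, m+1]` gives a strictly smaller mean. -/

section PooledMean

variable {n : ℕ → ℝ} (Y : ℕ → ℝ) {i k j : ℕ}

lemma pooledWeight_pos (hij : i ≤ j) (hn : ∀ h, i ≤ h → h ≤ j → 0 < n h) :
    0 < pooledWeight n i j :=
  Finset.sum_pos (fun h hh => hn h (mem_Icc.1 hh).1 (mem_Icc.1 hh).2) ⟨i, by simpa using hij⟩

lemma pooledMean_self (hn : n i ≠ 0) : pooledMean n Y i i = Y i := by
  simp only [pooledMean, pooledWeight, Icc_self, sum_singleton, mul_div_cancel_left₀ _ hn]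

section Split

variable (hik : i ≤ k) (hkj : k < j) (hn : ∀ h, i ≤ h → h ≤ j → 0 < n h)
include hik hkj hn

lemma pooledWeight_left_pos : 0 < pooledWeight n i k :=
  pooledWeight_pos hik fun h h₁ h₂ => hn h h₁ (by omega)

lemma pooledWeight_right_pos : 0 < pooledWeight n (k + 1) j :=
  pooledWeight_pos hkj fun h h₁ h₂ => hn h (by omega) h₂

lemma pooledMean_split :
    pooledMean n Y i j = (pooledWeight n i k * pooledMean n Y i k
      + pooledWeight n (k + 1) j * pooledMean n Y (k + 1) j)
      / (pooledWeight n i k + pooledWeight n (k + 1) j) := by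
  have hsplit : Icc i j = Icc i k ∪ Icc (k + 1) j := by ext; simp only [mem_Icc, mem_union]; omega
  have hdisj : Disjoint (Icc i k) (Icc (k + 1) j) := disjoint_left.2 fun h h₁ h₂ => by
    simp only [mem_Icc] at h₁ h₂; omega
  have ha := (pooledWeight_left_pos hik hkj hn).ne'
  have hb := (pooledWeight_right_pos hik hkj hn).ne'
  simp only [pooledMean, pooledWeight] at ha hb ⊢
  rw [hsplit, sum_union hdisj, sum_union hdisj]
  field_simp

lemma pooledMean_le_of_le_of_le {c : ℝ} (hl : pooledMean n Y i k ≤ c)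
    (hr : pooledMean n Y (k + 1) j ≤ c) : pooledMean n Y i j ≤ c := by
  have ha := pooledWeight_left_pos hik hkj hn
  have hb := pooledWeight_right_pos hik hkj hn
  rw [pooledMean_split Y hik hkj hn, div_le_iff₀ (by positivity)]
  nlinarith

lemma le_pooledMean_of_le_of_le {c : ℝ} (hl : c ≤ pooledMean n Y i k)
    (hr : c ≤ pooledMean n Y (k + 1) j) : c ≤ pooledMean n Y i j := by
  have ha := pooledWeight_left_pos hik hkj hn
  have hb := pooledWeight_right_pos hik hkj hn
  rw [pooledMean_split Y hik hkj hn, le_div_iff₀ (by positivity)]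
  nlinarith

lemma pooledMean_lt_right_of_lt (h : pooledMean n Y i k < pooledMean n Y (k + 1) j) :
    pooledMean n Y i j < pooledMean n Y (k + 1) j := by
  have ha := pooledWeight_left_pos hik hkj hn
  have hb := pooledWeight_right_pos hik hkj hn
  rw [pooledMean_split Y hik hkj hn, div_lt_iff₀ (by positivity)]
  nlinarith

lemma pooledMean_le_left_of_right_le (h : pooledMean n Y (k + 1) j ≤ pooledMean n Y i j) :
    pooledMean n Y i j ≤ pooledMean n Y i k := by
  have ha := pooledWeight_left_pos hik hkj hn
  have hb := pooledWeight_right_pos hik hkj hn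
  rw [pooledMean_split Y hik hkj hn, le_div_iff₀ (by positivity)] at h
  rw [pooledMean_split Y hik hkj hn, div_le_iff₀ (by positivity)]
  nlinarith

end Split

lemma pooledMean_succ_le_of_forall_le {m : ℕ} (him : i ≤ m)
    (hn : ∀ h, i ≤ h → h ≤ m + 1 → 0 < n h)
    (hmax : ∀ j, i ≤ j → j ≤ m → pooledMean n Y j m ≤ pooledMean n Y i m)
    (hlast : Y (m + 1) ≤ pooledMean n Y i m) (j : ℕ) (hij : i ≤ j) (hjm : j ≤ m + 1) :
    pooledMean n Y j (m + 1) ≤ pooledMean n Y i (m + 1) := by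
  have hself : pooledMean n Y (m + 1) (m + 1) = Y (m + 1) :=
    pooledMean_self Y (hn (m + 1) (by omega) le_rfl).ne'
  have hmean_ge_last : Y (m + 1) ≤ pooledMean n Y i (m + 1) :=
    le_pooledMean_of_le_of_le Y him (by omega) hn hlast hself.ge
  obtain rfl | hij := hij.eq_or_lt
  · exact le_rfl
  obtain rfl | hjm := hjm.eq_or_lt
  · exact hself ▸ hmean_ge_last
  obtain ⟨k, rfl⟩ : ∃ k, j = k + 1 := ⟨j - 1, by omega⟩
  have hsuffix : pooledMean n Y (k + 1) (m + 1) ≤ pooledMean n Y i m :=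
    pooledMean_le_of_le_of_le Y (by omega) (by omega) (fun h h₁ h₂ => hn h (by omega) h₂)
      (hmax _ hij.le (by omega)) (hself ▸ hlast)
  have hprefix : pooledMean n Y i m ≤ pooledMean n Y i k :=
    pooledMean_le_left_of_right_le Y (by omega) (by omega) (fun h h₁ h₂ => hn h h₁ (by omega))
      (hmax _ hij.le (by omega))
  exact le_pooledMean_of_le_of_le Y (by omega) (by omega) hn (hsuffix.trans hprefix) le_rfl

end PooledMean

section FirstIdx

variable (n Y : ℕ → ℝ) {t : ℕ}

lemma firstIdx_spec (ht : 1 ≤ t) :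
    1 ≤ firstIdx n Y t ∧ firstIdx n Y t ≤ t ∧
      ∀ j, 1 ≤ j → j ≤ t → pooledMean n Y j t ≤ pooledMean n Y (firstIdx n Y t) t := by
  obtain ⟨b, hb, hmax⟩ := exists_max_image (Icc 1 t) (fun j => pooledMean n Y j t)
    ⟨1, mem_Icc.2 ⟨le_rfl, ht⟩⟩
  have hb' := mem_Icc.1 hb
  exact Nat.sInf_mem (s := {j | 1 ≤ j ∧ j ≤ t ∧ _})
    ⟨b, hb'.1, hb'.2, fun j h₁ h₂ => hmax j (mem_Icc.2 ⟨h₁, h₂⟩)⟩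

lemma firstIdx_le (t : ℕ) : firstIdx n Y t ≤ t := by
  rcases Nat.eq_zero_or_pos t with rfl | ht
  · refine (Nat.sInf_eq_zero.2 (Or.inr (Set.eq_empty_of_forall_notMem fun j hj => ?_))).le
    exact absurd (hj.1.trans hj.2.1) (by omega)
  · exact (firstIdx_spec n Y ht).2.1

lemma firstIdx_eq_of_forall {i : ℕ} (hi : 1 ≤ i) (hit : i ≤ t)
    (hlt : ∀ j, 1 ≤ j → j < i → pooledMean n Y j t < pooledMean n Y i t)
    (hge : ∀ j, i ≤ j → j ≤ t → pooledMean n Y j t ≤ pooledMean n Y i t) :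
    firstIdx n Y t = i := by
  have hmem : i ∈ {j | 1 ≤ j ∧ j ≤ t ∧
      ∀ j', 1 ≤ j' → j' ≤ t → pooledMean n Y j' t ≤ pooledMean n Y j t} :=
    ⟨hi, hit, fun j h₁ h₂ => (lt_or_ge j i).elim (fun h => (hlt j h₁ h).le) (hge j · h₂)⟩
  refine le_antisymm (Nat.sInf_le hmem) (le_csInf ⟨i, hmem⟩ fun j ⟨hj, _, hjmax⟩ => ?_)
  by_contra! hji
  exact (hlt j hj hji).not_ge (hjmax i hi hit)

end FirstIdx

section Estimates

variable (n Y : ℕ → ℝ) {m : ℕ}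

lemma muhat_sdIdx_one (hm : 1 ≤ m) :
    muhat n Y m (sdIdx n Y m 1) = pooledMean n Y (sdIdx n Y m 1) m := by
  obtain ⟨f, rfl⟩ : ∃ f, m = f + 1 := ⟨m - 1, by omega⟩
  simp [muhat, sdIdx, sdmmsaAux]

lemma muhat_sdIdx_two (h : 1 < sdIdx n Y m 1) :
    muhat n Y m (sdIdx n Y m 2) = pooledMean n Y (sdIdx n Y m 2) (sdIdx n Y m 1 - 1) := by
  have hi₁ : sdIdx n Y m 1 = firstIdx n Y m := rfl
  have hi₂ : sdIdx n Y m 2 = firstIdx n Y (firstIdx n Y m - 1) := rfl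
  rw [hi₁] at h ⊢
  rw [hi₂]
  have hm := firstIdx_le n Y m
  have hi₂_le := firstIdx_le n Y (firstIdx n Y m - 1)
  obtain ⟨f, rfl⟩ : ∃ f, m = f + 1 + 1 := ⟨m - 2, by omega⟩
  rw [muhat, sdmmsaAux, if_neg (by omega), sdmmsaAux, if_pos le_rfl]

end Estimates

theorem firstIdx_succ_of_middle_last_general (m : ℕ) (n Y : ℕ → ℝ)
    (hn : ∀ h, 1 ≤ h → h ≤ m + 1 → 0 < n h)
    (htwo : 1 < sdIdx n Y m 1)
    (hlow : muhat n Y m (sdIdx n Y m 2) < Y (m + 1))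
    (hhigh : Y (m + 1) ≤ muhat n Y m (sdIdx n Y m 1)) :
    firstIdx n Y (m + 1) = sdIdx n Y m 1 := by
  have hm : 1 ≤ m := htwo.le.trans (firstIdx_le n Y m)
  rw [muhat_sdIdx_two n Y htwo] at hlow
  rw [muhat_sdIdx_one n Y hm] at hhigh
  obtain ⟨k, hk⟩ : ∃ k, sdIdx n Y m 1 = k + 1 := ⟨_, (Nat.succ_pred_eq_of_pos (by omega)).symm⟩
  have hi₁ : firstIdx n Y m = k + 1 := hk
  have hi₂ : sdIdx n Y m 2 = firstIdx n Y k := by rw [sdIdx, hk]; rfl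
  rw [hk, hi₂, Nat.add_sub_cancel] at hlow
  rw [hk] at hhigh ⊢
  obtain ⟨-, hkm, hmax₁⟩ := hi₁ ▸ firstIdx_spec n Y hm
  obtain ⟨-, -, hmax₂⟩ := firstIdx_spec n Y (t := k) (by omega)
  have hge := pooledMean_succ_le_of_forall_le Y hkm (fun h h₁ h₂ => hn h (by omega) h₂)
    (fun j hj h => hmax₁ j (by omega) h) hhigh
  have hlast : Y (m + 1) ≤ pooledMean n Y (k + 1) (m + 1) :=
    pooledMean_self Y (hn (m + 1) (by omega) le_rfl).ne' ▸ hge (m + 1) (by omega) le_rfl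
  refine firstIdx_eq_of_forall n Y (by omega) (by omega) (fun j hj hjk => ?_) hge
  exact pooledMean_lt_right_of_lt Y (by omega) (by omega) (fun h h₁ h₂ => hn h (by omega) h₂)
    (((hmax₂ j hj (by omega)).trans_lt hlow).trans_le hlast)

/-- eq. (2.22), second case: if the SDMMSA on the first `m` points takes at
least two steps (so that `i_2(m) = sdIdx n Y m 2` is defined, i.e. `i_1(m) > 1`) and
`μ̂_{i_2(m),m} < Ȳ_{m+1} ≤ μ̂_{i_1(m),m}`, then `i_1(m+1) = i_1(m)`. -/
theorem firstIdx_succ_of_middle_last (m : ℕ) (hm : 1 ≤ m) (n Y : ℕ → ℝ)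
    (hn : ∀ h, 1 ≤ h → h ≤ m + 1 → 0 < n h)
    (htwo : 1 < sdIdx n Y m 1)
    (hlow : muhat n Y m (sdIdx n Y m 2) < Y (m + 1))
    (hhigh : Y (m + 1) ≤ muhat n Y m (sdIdx n Y m 1)) :
    firstIdx n Y (m + 1) = sdIdx n Y m 1 :=
  firstIdx_succ_of_middle_last_general m n Y hn htwo hlow hhigh
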